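/- arXiv:2403.04886 — 2 statements merged into one kernel-verified Lean document; each statement's English description precedes it below -/
import Mathlib

section
/- Let x₁, ..., xₙ ∈ ℝⁿ be linearly independent and let w = Σᵢ μᵢ xᵢ with all μᵢ > 0. For i,j ∈ {1,...,n} with i ≠ j, the intersection of the cone generated by x₁,...,x_{i−1}, w, x_{i+1},...,xₙ with the cone generated by x₁,...,x_{j−1}, w, x_{j+1},...,xₙ is the cone generated by w together with {x_ℓ : ℓ ≠ i, ℓ ≠ j}. In particular, the cones Cᵢ have pairwise disjoint interiors. -/
/-- The cone generated by a family of vectors: all nonnegative combinations. -/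
def coneOf {n m : ℕ} (v : Fin m → (Fin n → ℝ)) : Set (Fin n → ℝ) :=
  {p | ∃ lam : Fin m → ℝ, (∀ i, 0 ≤ lam i) ∧ p = ∑ i, lam i • v i}

lemma coeff_unique' {n : ℕ} {x : Fin n → (Fin n → ℝ)} (hind : LinearIndependent ℝ x)
    {c d : Fin n → ℝ} (h : ∑ l, c l • x l = ∑ l, d l • x l) : c = d := by
  funext l
  have h0 : ∑ l, (c - d) l • x l = 0 := by
    simp [sub_smul, Finset.sum_sub_distrib, h]
  have := Fintype.linearIndependent_iff.mp hind (c - d) h0 l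
  simpa [sub_eq_zero] using this

lemma sum_update_smul {n : ℕ} (x : Fin n → (Fin n → ℝ)) (w : Fin n → ℝ) (i : Fin n)
    (c : Fin n → ℝ) :
    ∑ l, c l • Function.update x i w l
      = c i • w + ∑ l, (Function.update c i 0) l • x l := by
  have h1 : ∑ l, c l • Function.update x i w l
      = ∑ l, Function.update (fun l => c l • x l) i (c i • w) l :=
    Finset.sum_congr rfl fun l _ => by
      rcases eq_or_ne l i with rfl | hl
      · simp
      · simp [Function.update_of_ne hl]
  have h2 : ∑ l, (Function.update c i 0) l • x l
      = ∑ l, Function.update (fun l => c l • x l) i ((0:ℝ) • x i) l :=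
    Finset.sum_congr rfl fun l _ => by
      rcases eq_or_ne l i with rfl | hl
      · simp
      · simp [Function.update_of_ne hl]
  rw [h1, h2, Finset.sum_update_of_mem (Finset.mem_univ i),
      Finset.sum_update_of_mem (Finset.mem_univ i)]
  simp

lemma normal_form {n : ℕ} (x : Fin n → (Fin n → ℝ)) (μ : Fin n → ℝ) (i : Fin n)
    (c : Fin n → ℝ) :
    ∑ l, c l • Function.update x i (∑ l, μ l • x l) l
      = ∑ l, (Function.update c i 0 l + c i * μ l) • x l := by
  rw [sum_update_smul, Finset.smul_sum]
  simp only [add_smul, Finset.sum_add_distrib, smul_smul]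
  ring_nf

/-- For linearly independent x₁,...,xₙ and w a strictly positive combination, the
intersection Cᵢ ∩ Cⱼ (i ≠ j) is the cone generated by w together with the x_ℓ for
ℓ ≠ i, j; in particular the cones Cᵢ have pairwise disjoint interiors. -/
theorem stmt_12 (n : ℕ) (x : Fin n → (Fin n → ℝ))
    (hind : LinearIndependent ℝ x)
    (w : Fin n → ℝ) (μ : Fin n → ℝ) (hμ : ∀ i, 0 < μ i) (hw : w = ∑ i, μ i • x i)
    (i j : Fin n) (hij : i ≠ j) :
    coneOf (Function.update x i w) ∩ coneOf (Function.update x j w)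
      = {p | ∃ a : ℝ, ∃ lam : Fin n → ℝ, 0 ≤ a ∧ (∀ l, 0 ≤ lam l) ∧
          lam i = 0 ∧ lam j = 0 ∧ p = a • w + ∑ l, lam l • x l} ∧
    interior (coneOf (Function.update x i w)) ∩
      interior (coneOf (Function.update x j w)) = ∅ := by
  have hji : j ≠ i := hij.symm
  have key : coneOf (Function.update x i w) ∩ coneOf (Function.update x j w)
      = {p | ∃ a : ℝ, ∃ lam : Fin n → ℝ, 0 ≤ a ∧ (∀ l, 0 ≤ lam l) ∧
          lam i = 0 ∧ lam j = 0 ∧ p = a • w + ∑ l, lam l • x l} := by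
    ext p
    constructor
    · rintro ⟨⟨c, hc, hpc⟩, ⟨d, hd, hpd⟩⟩
      have hcd : (fun l => Function.update c i 0 l + c i * μ l)
          = (fun l => Function.update d j 0 l + d j * μ l) := by
        apply coeff_unique' hind
        rw [← normal_form, ← normal_form, ← hw, ← hpc, ← hpd]
      have hcdj := congrFun hcd j
      have hcdi := congrFun hcd i
      simp [Function.update_of_ne hji, Function.update_of_ne hij] at hcdj hcdi
      have hci : c i = d j := by nlinarith [hc j, hd i, hμ i, hμ j]
      have hcj : c j = 0 := by nlinarith [hμ j]
      refine ⟨c i, Function.update c i 0, hc i, ?_, by simp, ?_, ?_⟩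
      · intro l
        rcases eq_or_ne l i with rfl | hl
        · simp
        · simpa [Function.update_of_ne hl] using hc l
      · simp [Function.update_of_ne hji, hcj]
      · rw [hpc, sum_update_smul]
    · rintro ⟨a, lam, ha, hlam, hli, hlj, rfl⟩
      have mem : ∀ k : Fin n, lam k = 0 →
          (a • w + ∑ l, lam l • x l) ∈ coneOf (Function.update x k w) := by
        intro k hk
        refine ⟨Function.update lam k a, ?_, ?_⟩
        · intro l
          rcases eq_or_ne l k with rfl | hl
          · simpa using ha
          · simpa [Function.update_of_ne hl] using hlam l
        · rw [sum_update_smul]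
          have : Function.update (Function.update lam k a) k 0 = lam := by
            funext l
            rcases eq_or_ne l k with rfl | hl
            · simp [hk]
            · simp [Function.update_of_ne hl]
          rw [this]
          simp
      exact ⟨mem i hli, mem j hlj⟩
  refine ⟨key, ?_⟩
  rw [← interior_inter, key]
  set z : Fin n → (Fin n → ℝ) := Function.update (Function.update x i w) j 0 with hz
  set V : Submodule ℝ (Fin n → ℝ) := Submodule.span ℝ (Set.range z) with hV
  have hSV : {p | ∃ a : ℝ, ∃ lam : Fin n → ℝ, 0 ≤ a ∧ (∀ l, 0 ≤ lam l) ∧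
      lam i = 0 ∧ lam j = 0 ∧ p = a • w + ∑ l, lam l • x l} ⊆ (V : Set (Fin n → ℝ)) := by
    rintro p ⟨a, lam, ha, hlam, hli, hlj, rfl⟩
    apply (Submodule.mem_span_range_iff_exists_fun ℝ).mpr
    refine ⟨Function.update lam i a, ?_⟩
    rw [hz, sum_update_smul]
    have h1 : Function.update (Function.update lam i a) j 0
        = Function.update lam i a := by
      funext l
      rcases eq_or_ne l j with rfl | hl
      · simp [Function.update_of_ne hji, hlj]
      · simp [Function.update_of_ne hl]
    rw [Function.update_of_ne hji, h1, sum_update_smul]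
    have h2 : Function.update (Function.update lam i a) i 0 = lam := by
      funext l
      rcases eq_or_ne l i with rfl | hl
      · simp [hli]
      · simp [Function.update_of_ne hl]
    rw [h2]
    simp
  have hxiV : x i ∉ V := by
    intro hmem
    obtain ⟨c, hcz⟩ := (Submodule.mem_span_range_iff_exists_fun ℝ).mp hmem
    rw [hz] at hcz
    rw [sum_update_smul, smul_zero, zero_add, hw, normal_form] at hcz
    have hxi : x i = ∑ l, (Pi.single i (1:ℝ) : Fin n → ℝ) l • x l := by
      symm
      have := Finset.sum_eq_single_of_mem (f := fun l => (Pi.single i (1:ℝ) : Fin n → ℝ) l • x l)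
        i (Finset.mem_univ i) (fun b _ hb => by simp [Pi.single_apply, hb])
      simpa using this
    rw [hxi] at hcz
    have hcd := coeff_unique' hind hcz
    have h1 := congrFun hcd j
    have h2 := congrFun hcd i
    simp [Function.update_of_ne hji, Pi.single_apply, hji, Function.update_of_ne hij] at h1 h2
    rcases h1 with h1 | h1
    · rw [h1] at h2
      simp at h2
    · exact absurd h1 (ne_of_gt (hμ j))
  have hVtop : V ≠ ⊤ := fun h => hxiV (h ▸ Submodule.mem_top)
  have hVint : interior (V : Set (Fin n → ℝ)) = ∅ := by
    by_contra h
    exact hVtop (Submodule.eq_top_of_nonempty_interior' V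
      (Set.nonempty_iff_ne_empty.mpr h))
  have := interior_mono hSV
  rw [hVint] at this
  exact Set.subset_empty_iff.mp this
end

section
/- Let P ⊆ ℝⁿ be a polytope with vertex v such that the linear functional w is uniquely maximized over P at v. Then for all sufficiently small ε > 0, the polytope P′ = P ∩ {x : wᵀx ≤ wᵀv − ε} has the same vertex set as P except that v is removed and for each edge of P incident to v, a new vertex is created on the relative interior of that edge; all vertices of P other than v remain vertices of P′. -/
/-- E is an edge of P: a 1-dimensional extreme (face) subset of P. -/
def IsEdgeOf {n : ℕ} (P E : Set (Fin n → ℝ)) : Prop :=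
  IsExtreme ℝ P E ∧ Module.finrank ℝ (affineSpan ℝ E).direction = 1

/-!
Write `l x = ∑ i, w i * x i` and `β = l v - ε`, with `ε` below the gap between `l v` and the
other points of `s`, so that `P` is the convex hull of `v` and of points lying strictly below
the level `β`.

The central projection `π` from `v` onto the hyperplane `l = β` maps `P \ {v}` into the new
facet and maps open segments to open segments. A vertex `x` of the truncation with `l x < β`
is a vertex of `P`, since near `x` the cut changes nothing. A vertex `x` with `l x = β` gives
the edge `P ∩ line[v, x]`: if a point of this line lies in an open segment of `P`, then `π`
sends that segment to an open segment through the vertex `x` of the facet, so both ends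
project to `x`, hence lie on the line. Since `x` lies strictly between `v` and a point below
the cut, it is in the relative interior of this edge. Conversely, an edge through `v` meets
the hyperplane in one point, and this point is extreme in the truncation because
`{l = β}` is a face of the half-space `{l ≤ β}`.
-/

open Set AffineMap Filter Topology

section

variable {E : Type*} [AddCommGroup E] [Module ℝ E]

/-- Central projection from `v` onto `{l = β}`; points with `l p = l v` are sent to `v`
(division by zero). -/
noncomputable def centralProj (l : E →ₗ[ℝ] ℝ) (v : E) (β : ℝ) (p : E) : E :=
  v + ((l v - β) / (l v - l p)) • (p - v)

section CentralProjection

variable {l : E →ₗ[ℝ] ℝ} {v p x y z z' : E} {β μ : ℝ}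

lemma apply_centralProj (hp : l p ≠ l v) : l (centralProj l v β p) = β := by
  have : l v - l p ≠ 0 := sub_ne_zero.2 hp.symm
  simp only [centralProj, map_add, map_smul, map_sub, smul_eq_mul]
  field_simp
  ring

lemma centralProj_eq_self (hx : l x = β) (hβ : β ≠ l v) : centralProj l v β x = x := by
  simp [centralProj, hx, div_self (sub_ne_zero.2 hβ.symm)]

lemma centralProj_lineMap (hμ : μ ≠ 0) :
    centralProj l v β (lineMap v y μ) = centralProj l v β y := by
  have hl : l v - l (lineMap v y μ) = μ * (l v - l y) := by
    simp only [lineMap_apply_module', map_add, map_smul, map_sub, smul_eq_mul]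
    ring
  rw [centralProj, hl, centralProj, lineMap_apply_module', add_sub_cancel_right, smul_smul]
  rcases eq_or_ne (l v - l y) 0 with h | h
  · simp [h]
  · congr 2
    field_simp

lemma centralProj_mem_segment (hy : l y ≤ β) (hβ : β < l v) :
    centralProj l v β y ∈ segment ℝ v y := by
  rw [segment_eq_image_lineMap]
  refine ⟨(l v - β) / (l v - l y), ⟨by apply div_nonneg <;> linarith,
    div_le_one_of_le₀ (by linarith) (by linarith)⟩, ?_⟩
  rw [lineMap_apply_module', centralProj, add_comm]

lemma centralProj_mem_openSegment (hx : x ∈ openSegment ℝ z z') (hz : l z < l v)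
    (hz' : l z' < l v) :
    centralProj l v β x ∈ openSegment ℝ (centralProj l v β z) (centralProj l v β z') := by
  obtain ⟨a, b, ha, hb, hab, rfl⟩ := hx
  have hlx : l v - l (a • z + b • z') = a * (l v - l z) + b * (l v - l z') := by
    simp only [map_add, map_smul, smul_eq_mul]
    linear_combination (-l v) * hab
  have hz0 : 0 < l v - l z := by linarith
  have hz'0 : 0 < l v - l z' := by linarith
  have hx0 : 0 < a * (l v - l z) + b * (l v - l z') := by positivity
  refine ⟨a * (l v - l z) / (a * (l v - l z) + b * (l v - l z')),
    b * (l v - l z') / (a * (l v - l z) + b * (l v - l z')), by positivity, by positivity,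
    by field_simp, ?_⟩
  simp only [centralProj, hlx]
  match_scalars
  · field_simp
    linear_combination (β - l v) * hab
  · field_simp
  · field_simp

lemma centralProj_eq_iff (hx : l x = β) (hβ : β ≠ l v) :
    centralProj l v β p = x ↔ p ∈ line[ℝ, v, x] ∧ p ≠ v := by
  constructor
  · intro h
    have hxv : x ≠ v := by rintro rfl; exact hβ hx.symm
    obtain ⟨k, hk⟩ : ∃ k, k = (l v - β) / (l v - l p) := ⟨_, rfl⟩
    replace h : v + k • (p - v) = x := by rw [hk]; exact h
    have hk0 : k ≠ 0 := by rintro rfl; simp [← h] at hxv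
    refine ⟨mem_affineSpan_pair_iff_exists_lineMap_eq.2 ⟨k⁻¹, ?_⟩, ?_⟩
    · rw [lineMap_apply_module', ← h, add_sub_cancel_left, smul_smul, inv_mul_cancel₀ hk0,
        one_smul, sub_add_cancel]
    · rintro rfl
      simp [← h] at hxv
  · rintro ⟨hp, hpv⟩
    obtain ⟨r, rfl⟩ := mem_affineSpan_pair_iff_exists_lineMap_eq.1 hp
    have hr : r ≠ 0 := by rintro rfl; simp at hpv
    rw [centralProj_lineMap hr, centralProj_eq_self hx hβ]

end CentralProjection

section HalfSpace

variable {l : E →ₗ[ℝ] ℝ} {β : ℝ} {P F : Set E} {v x : E}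

lemma isExtreme_setOf_eq_setOf_le (l : E →ₗ[ℝ] ℝ) (β : ℝ) :
    IsExtreme ℝ {x | l x ≤ β} {x | l x = β} := by
  refine ⟨fun x hx => hx.le,
    fun y (hy : l y ≤ β) z (hz : l z ≤ β) x (hx : l x = β) hxyz => ?_⟩
  obtain ⟨a, b, ha, hb, hab, rfl⟩ := hxyz
  simp only [map_add, map_smul, smul_eq_mul] at hx
  show l y = β
  have : a * β ≤ a * l y := by
    linarith [mul_le_mul_of_nonneg_left hz hb.le,
      show a * β + b * β = β by rw [← add_mul, hab, one_mul]]
  exact le_antisymm hy (le_of_mul_le_mul_left this ha)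

lemma mem_extremePoints_of_mem_extremePoints_inter_setOf_le (hP : Convex ℝ P)
    (hx : x ∈ (P ∩ {z | l z ≤ β}).extremePoints ℝ) (hlx : l x < β) :
    x ∈ P.extremePoints ℝ := by
  refine ⟨hx.1.1, fun y hy z hz hxyz => ?_⟩
  have hnear : ∀ u, ∀ᶠ t in 𝓝 (0 : ℝ), l (lineMap x u t) < β := fun u => by
    have hl : ∀ t : ℝ, l (lineMap x u t) = lineMap (l x) (l u) t :=
      l.toAffineMap.apply_lineMap x u
    simp_rw [hl]
    exact (lineMap_continuous.tendsto' (0 : ℝ) (l x) (by simp)).eventually (gt_mem_nhds hlx)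
  obtain ⟨t, ⟨hty, htz⟩, ht0, ht1⟩ :=
    (((hnear y).and (hnear z)).filter_mono nhdsWithin_le_nhds
      |>.and (Ioo_mem_nhdsGT one_pos)).exists
  obtain ⟨a, b, ha, hb, hab, hxab⟩ := hxyz
  have hshrunk : lineMap x y t = x := hx.2
    ⟨hP.lineMap_mem hx.1.1 hy ⟨ht0.le, ht1.le⟩, hty.le⟩
    ⟨hP.lineMap_mem hx.1.1 hz ⟨ht0.le, ht1.le⟩, htz.le⟩ ⟨a, b, ha, hb, hab, by
      rw [lineMap_apply_module', lineMap_apply_module']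
      linear_combination (norm := module) t • hxab + hab • ((1 - t) • x)⟩
  exact ((lineMap_eq_left_iff.1 hshrunk).resolve_right ht0.ne').symm

lemma eq_of_mem_of_finrank_direction_eq_one
    (hF : Module.finrank ℝ (affineSpan ℝ F).direction = 1) {y : E} (hv : v ∈ F) (hx : x ∈ F)
    (hy : y ∈ F) (hxv : l x ≠ l v) (hyx : l y = l x) : y = x := by
  have hmem : ∀ {p q}, p ∈ F → q ∈ F → p - q ∈ (affineSpan ℝ F).direction :=
    fun hp hq => AffineSubspace.vsub_mem_direction (subset_affineSpan ℝ F hp)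
      (subset_affineSpan ℝ F hq)
  obtain ⟨c, hc⟩ := (finrank_eq_one_iff_of_nonzero'
    (⟨x - v, hmem hx hv⟩ : (affineSpan ℝ F).direction)
    (by simpa [sub_eq_zero] using fun h => hxv (congrArg l h))).1 hF ⟨y - x, hmem hy hx⟩
  replace hc : c • (x - v) = y - x := congrArg Subtype.val hc
  have hc0 : c = 0 := by
    have := congrArg l hc
    simp only [map_smul, map_sub, smul_eq_mul, hyx, sub_self] at this
    exact (mul_eq_zero.1 this).resolve_right (sub_ne_zero.2 hxv)
  rwa [hc0, zero_smul, eq_comm, sub_eq_zero] at hc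

lemma mem_extremePoints_inter_setOf_le_of_isExtreme (hF : IsExtreme ℝ P F)
    (hF1 : Module.finrank ℝ (affineSpan ℝ F).direction = 1) (hv : v ∈ F) (hx : x ∈ F)
    (hlx : l x = β) (hβ : β < l v) : x ∈ (P ∩ {z | l z ≤ β}).extremePoints ℝ := by
  refine ⟨⟨hF.subset hx, hlx.le⟩, fun y hy z hz hxyz => ?_⟩
  have hly : l y = β :=
    (isExtreme_setOf_eq_setOf_le l β).left_mem_of_mem_openSegment hy.2 hz.2 hlx hxyz
  exact eq_of_mem_of_finrank_direction_eq_one hF1 hv hx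
    (hF.left_mem_of_mem_openSegment hy.1 hz.1 hx hxyz) (by linarith) (by rw [hly, hlx])

end HalfSpace

lemma mem_intrinsicInterior_of_openSegment_subset [TopologicalSpace E] [SeparatingDual ℝ E]
    {F : Set E} {a b x : E} (hab : a ≠ b) (hseg : openSegment ℝ a b ⊆ F)
    (hF : F ⊆ line[ℝ, a, b]) (hx : x ∈ openSegment ℝ a b) :
    x ∈ intrinsicInterior ℝ F := by
  obtain ⟨g, hg⟩ := SeparatingDual.exists_separating_of_ne (R := ℝ) hab
  have hg_lineMap : ∀ r : ℝ, g (lineMap a b r) = lineMap (g a) (g b) r :=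
    (g : E →ₗ[ℝ] ℝ).toAffineMap.apply_lineMap a b
  have hmem : ∀ r : ℝ, lineMap a b r ∈ openSegment ℝ a b ↔
      g (lineMap a b r) ∈ openSegment ℝ (g a) (g b) := fun r => by
    rw [openSegment_eq_image_lineMap, openSegment_eq_image_lineMap, hg_lineMap]
    exact (lineMap_injective ℝ hab).mem_set_image.trans
      (lineMap_injective ℝ hg).mem_set_image.symm
  have hU : IsOpen {p : affineSpan ℝ F | g p ∈ openSegment ℝ (g a) (g b)} := by
    rw [openSegment_eq_Ioo' hg]
    exact isOpen_Ioo.preimage (g.continuous.comp continuous_subtype_val)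
  obtain ⟨r, -, rfl⟩ := (openSegment_eq_image_lineMap ℝ a b).subset hx
  refine mem_intrinsicInterior.2 ⟨⟨_, subset_affineSpan ℝ F (hseg hx)⟩,
    interior_maximal ?_ hU ((hmem r).1 hx), rfl⟩
  rintro ⟨p, hp⟩ hgp
  obtain ⟨r', rfl⟩ := mem_affineSpan_pair_iff_exists_lineMap_eq.1 (affineSpan_le.2 hF hp)
  exact hseg ((hmem r').2 hgp)

section Truncation

variable {P T : Set E} {v x p : E} {l : E →ₗ[ℝ] ℝ} {β : ℝ}

lemma exists_eq_lineMap_of_mem_convexHull_insert (hP : P = convexHull ℝ (insert v T))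
    (hT : ∀ y ∈ T, l y < β) (hp : p ∈ P) (hpv : p ≠ v) :
    ∃ y ∈ P, l y < β ∧ ∃ μ ∈ Ioc (0 : ℝ) 1, p = lineMap v y μ := by
  rcases T.eq_empty_or_nonempty with rfl | hT_ne
  · simp [hP, hpv] at hp
  rw [hP, convexHull_insert hT_ne, mem_convexJoin] at hp
  obtain ⟨_, hv, y, hy, hpy⟩ := hp
  rw [mem_singleton_iff.1 hv] at hpy
  obtain ⟨μ, ⟨hμ0, hμ1⟩, rfl⟩ := (segment_eq_image_lineMap ℝ v y).subset hpy
  refine ⟨y, hP ▸ convexHull_mono (subset_insert v T) hy,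
    convexHull_min hT (convex_halfSpace_lt l.isLinear β) hy, μ, ⟨?_, hμ1⟩, rfl⟩
  exact hμ0.lt_of_ne (by rintro rfl; simp at hpv)

lemma apply_lt_of_mem_convexHull_insert (hP : P = convexHull ℝ (insert v T))
    (hT : ∀ y ∈ T, l y < β) (hβ : β < l v) (hp : p ∈ P) (hpv : p ≠ v) : l p < l v := by
  obtain ⟨y, -, hy, μ, ⟨hμ0, -⟩, rfl⟩ :=
    exists_eq_lineMap_of_mem_convexHull_insert hP hT hp hpv
  simp only [lineMap_apply_module', map_add, map_smul, map_sub, smul_eq_mul]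
  nlinarith

lemma centralProj_mem_convexHull_insert (hP : P = convexHull ℝ (insert v T))
    (hT : ∀ y ∈ T, l y < β) (hβ : β < l v) (hp : p ∈ P) (hpv : p ≠ v) :
    centralProj l v β p ∈ P := by
  obtain ⟨y, hyP, hy, μ, ⟨hμ0, -⟩, rfl⟩ :=
    exists_eq_lineMap_of_mem_convexHull_insert hP hT hp hpv
  rw [centralProj_lineMap hμ0.ne']
  have hvP : v ∈ P := hP ▸ subset_convexHull ℝ _ (mem_insert v T)
  exact (hP ▸ convex_convexHull ℝ _ : Convex ℝ P).segment_subset hvP hyP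
    (centralProj_mem_segment hy.le hβ)

lemma centralProj_eq_of_mem_openSegment (hP : P = convexHull ℝ (insert v T))
    (hT : ∀ y ∈ T, l y < β) (hβ : β < l v)
    (hx : x ∈ (P ∩ {z | l z ≤ β}).extremePoints ℝ) {z z' : E} (hz : z ∈ P)
    (hz' : z' ∈ P) (hzv : z ≠ v) (hp : p ∈ openSegment ℝ z z')
    (hpx : centralProj l v β p = x) : centralProj l v β z = x := by
  by_cases hz'v : z' = v
  · subst hz'v
    rw [openSegment_symm, openSegment_eq_image_lineMap] at hp
    obtain ⟨μ, hμ, rfl⟩ := hp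
    rwa [centralProj_lineMap hμ.1.ne'] at hpx
  have hlz := apply_lt_of_mem_convexHull_insert hP hT hβ hz hzv
  have hlz' := apply_lt_of_mem_convexHull_insert hP hT hβ hz' hz'v
  have hseg := centralProj_mem_openSegment (β := β) hp hlz hlz'
  rw [hpx] at hseg
  exact hx.2 ⟨centralProj_mem_convexHull_insert hP hT hβ hz hzv, (apply_centralProj hlz.ne).le⟩
    ⟨centralProj_mem_convexHull_insert hP hT hβ hz' hz'v, (apply_centralProj hlz'.ne).le⟩ hseg

lemma isExtreme_inter_affineSpan_pair (hv : v ∈ P.extremePoints ℝ)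
    (hP : P = convexHull ℝ (insert v T)) (hT : ∀ y ∈ T, l y < β) (hβ : β < l v)
    (hx : x ∈ (P ∩ {z | l z ≤ β}).extremePoints ℝ) (hlx : l x = β) :
    IsExtreme ℝ P (P ∩ line[ℝ, v, x]) := by
  refine ⟨inter_subset_left, fun z hz z' hz' p hp hpzz' => ⟨hz, ?_⟩⟩
  by_cases hpv : p = v
  · subst hpv
    rw [hv.2 hz hz' hpzz']
    exact left_mem_affineSpan_pair ℝ _ _
  by_cases hzv : z = v
  · rw [hzv]
    exact left_mem_affineSpan_pair ℝ _ _
  have hpx := (centralProj_eq_iff hlx hβ.ne).2 ⟨hp.2, hpv⟩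
  exact ((centralProj_eq_iff hlx hβ.ne).1
    (centralProj_eq_of_mem_openSegment hP hT hβ hx hz hz' hzv hpzz' hpx)).1

lemma finrank_direction_affineSpan_inter_affineSpan_pair (hvP : v ∈ P) (hxP : x ∈ P)
    (hxv : x ≠ v) :
    Module.finrank ℝ (affineSpan ℝ (P ∩ line[ℝ, v, x])).direction = 1 := by
  have hspan : affineSpan ℝ (P ∩ line[ℝ, v, x]) = line[ℝ, v, x] :=
    le_antisymm (affineSpan_le.2 inter_subset_right) (affineSpan_pair_le_of_mem_of_mem
      (subset_affineSpan ℝ _ ⟨hvP, left_mem_affineSpan_pair ℝ v x⟩)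
      (subset_affineSpan ℝ _ ⟨hxP, right_mem_affineSpan_pair ℝ v x⟩))
  rw [hspan, direction_affineSpan, vectorSpan_pair, vsub_eq_sub]
  exact finrank_span_singleton (sub_ne_zero.2 hxv.symm)

lemma mem_intrinsicInterior_inter_affineSpan_pair [TopologicalSpace E] [SeparatingDual ℝ E]
    (hP : P = convexHull ℝ (insert v T)) (hT : ∀ y ∈ T, l y < β) (hβ : β < l v)
    (hxP : x ∈ P) (hlx : l x = β) : x ∈ intrinsicInterior ℝ (P ∩ line[ℝ, v, x]) := by
  have hxv : x ≠ v := by rintro rfl; exact hβ.ne hlx.symm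
  obtain ⟨y, hyP, hy, μ, ⟨hμ0, hμ1⟩, hxy⟩ :=
    exists_eq_lineMap_of_mem_convexHull_insert hP hT hxP hxv
  have hμ1' : μ < 1 := hμ1.lt_of_ne (by rintro rfl; simp [hxy] at hlx; linarith)
  have hvy : v ≠ y := by rintro rfl; simp [hxy] at hxv
  have hvP : v ∈ P := hP ▸ subset_convexHull ℝ _ (mem_insert v T)
  have hPconv : Convex ℝ P := hP ▸ convex_convexHull ℝ _
  have hline : line[ℝ, v, x] ≤ line[ℝ, v, y] := affineSpan_pair_le_of_mem_of_mem
    (left_mem_affineSpan_pair ℝ v y) (hxy ▸ lineMap_mem_affineSpan_pair μ v y)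
  refine mem_intrinsicInterior_of_openSegment_subset hvy
    (fun q hq => ⟨hPconv.openSegment_subset hvP hyP hq, ?_⟩) (inter_subset_right.trans hline)
    ((openSegment_eq_image_lineMap ℝ v y).symm ▸ ⟨μ, ⟨hμ0, hμ1'⟩, hxy.symm⟩)
  obtain ⟨r, hr, rfl⟩ := (openSegment_eq_image_lineMap ℝ v y).subset hq
  refine ((centralProj_eq_iff hlx hβ.ne).1 ?_).1
  rw [centralProj_lineMap hr.1.ne', ← centralProj_lineMap hμ0.ne', ← hxy,
    centralProj_eq_self hlx hβ.ne]

theorem extremePoints_inter_setOf_le [TopologicalSpace E] [SeparatingDual ℝ E]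
    (hv : v ∈ P.extremePoints ℝ) (hP : P = convexHull ℝ (insert v T))
    (hT : ∀ y ∈ T, l y < β) (hβ : β < l v) :
    (P ∩ {x | l x ≤ β}).extremePoints ℝ = (P.extremePoints ℝ \ {v}) ∪
      {x | ∃ F : Set E,
        (IsExtreme ℝ P F ∧ Module.finrank ℝ (affineSpan ℝ F).direction = 1) ∧ v ∈ F ∧
          x ∈ intrinsicInterior ℝ F ∧ l x = β} := by
  ext x
  constructor
  · intro hx
    have hle : l x ≤ β := hx.1.2
    rcases hle.lt_or_eq with hlt | hlx
    · exact Or.inl ⟨mem_extremePoints_of_mem_extremePoints_inter_setOf_le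
        (hP ▸ convex_convexHull ℝ _) hx hlt, by rintro rfl; exact hlt.not_gt hβ⟩
    · have hxv : x ≠ v := by rintro rfl; exact hβ.ne hlx.symm
      exact Or.inr ⟨P ∩ line[ℝ, v, x], ⟨isExtreme_inter_affineSpan_pair hv hP hT hβ hx hlx,
        finrank_direction_affineSpan_inter_affineSpan_pair hv.1 hx.1.1 hxv⟩,
        ⟨hv.1, left_mem_affineSpan_pair ℝ v x⟩,
        mem_intrinsicInterior_inter_affineSpan_pair hP hT hβ hx.1.1 hlx, hlx⟩
  · rintro (⟨hxe, hxv⟩ | ⟨F, ⟨hF, hF1⟩, hvF, hxF, hlx⟩)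
    · have hxT : x ∈ T := (extremePoints_convexHull_subset (hP ▸ hxe)).resolve_left hxv
      exact inter_extremePoints_subset_extremePoints_of_subset inter_subset_left
        ⟨⟨hxe.1, (hT x hxT).le⟩, hxe⟩
    · exact mem_extremePoints_inter_setOf_le_of_isExtreme hF hF1 hvF
        (intrinsicInterior_subset hxF) hlx hβ

end Truncation

end

/-- Cutting off the unique w-maximal vertex v of a polytope P by the half-space
{x : wᵀx ≤ wᵀv − ε} for all sufficiently small ε > 0: the vertex set of the
truncated polytope consists of all vertices of P except v, together with the new
vertices created on the relative interiors of the edges of P incident to v. -/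
theorem stmt_16 (n : ℕ) (s : Finset (Fin n → ℝ)) (P : Set (Fin n → ℝ))
    (hP : P = convexHull ℝ (s : Set (Fin n → ℝ)))
    (v : Fin n → ℝ) (hv : v ∈ P.extremePoints ℝ)
    (w : Fin n → ℝ)
    (hmax : ∀ x ∈ P, x ≠ v → (∑ i, w i * x i) < ∑ i, w i * v i) :
    ∃ ε₀ : ℝ, 0 < ε₀ ∧ ∀ ε : ℝ, 0 < ε → ε < ε₀ →
      (P ∩ {x | (∑ i, w i * x i) ≤ (∑ i, w i * v i) - ε}).extremePoints ℝ
        = (P.extremePoints ℝ \ {v}) ∪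
          {x | ∃ E : Set (Fin n → ℝ), IsEdgeOf P E ∧ v ∈ E ∧
            x ∈ intrinsicInterior ℝ E ∧
            (∑ i, w i * x i) = (∑ i, w i * v i) - ε} := by
  set l : (Fin n → ℝ) →ₗ[ℝ] ℝ := dotProductEquiv ℝ (Fin n) w
  have hvs : v ∈ s := extremePoints_convexHull_subset (hP ▸ hv)
  have hPv : P = convexHull ℝ (insert v ↑(s.erase v)) := by
    rw [← Finset.coe_insert, Finset.insert_erase hvs, hP]
  have hev : ∀ᶠ ε in 𝓝[>] (0 : ℝ), ∀ u ∈ s.erase v, l u < l v - ε := by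
    refine (eventually_all_finset _).2 fun u hu => ?_
    have hlt : l u < l v := hmax u (hP ▸ subset_convexHull ℝ _ (Finset.mem_of_mem_erase hu))
      (Finset.ne_of_mem_erase hu)
    filter_upwards [nhdsWithin_le_nhds (eventually_lt_nhds (sub_pos.2 hlt))] with ε hε
    linarith
  obtain ⟨ε₀, hε₀, hε⟩ := (nhdsGT_basis (0 : ℝ)).eventually_iff.1 hev
  exact ⟨ε₀, hε₀, fun ε hε0 hεε₀ =>
    extremePoints_inter_setOf_le hv hPv (hε ⟨hε0, hεε₀⟩) (by linarith)⟩
end
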